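/- Let R be a symmetric positive definite real m×m matrix and U ⊆ ℝ^m a nonempty closed convex set. For i = 1, 2, let v_i ∈ ℝ^m and let u_i ∈ U be the R-projection of R⁻¹v_i onto U, i.e. the unique point of U minimizing u ↦ ⟨R(u − R⁻¹v_i), u − R⁻¹v_i⟩ over U. Then ⟨u₁ − u₂, v₁ − v₂⟩ ≥ 0; that is, the feedback map v ↦ P_U^R[R⁻¹v] is monotone. -/

import Mathlib

/-!
Write `q(u) = ⟪T (u - z), u - z⟫` for a positive operator `T`. Along the segment from the
minimizer `u₀` towards any `u ∈ U`, `q` is a quadratic in the step `t` with linear coefficient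
`2 ⟪T (u₀ - z), u - u₀⟫`, so minimality on the convex set `U` forces this coefficient to be
nonnegative. Adding the two variational inequalities at `u₁` and `u₂` (with `T z_i = v_i`) gives
`⟪u₁ - u₂, v₁ - v₂⟫ ≥ ⟪T (u₁ - u₂), u₁ - u₂⟫ ≥ 0`.
-/

open RealInnerProductSpace

lemma nonneg_of_forall_mul_add_sq_mul_nonneg {a c : ℝ} (hc : 0 ≤ c)
    (h : ∀ t : ℝ, 0 < t → t ≤ 1 → 0 ≤ t * a + t ^ 2 * c) : 0 ≤ a := by
  by_contra! ha
  set t := min 1 (-a / (c + 1))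
  have ht : 0 < t := lt_min one_pos (div_pos (neg_pos.2 ha) (by positivity))
  have htc : t * (c + 1) ≤ -a := (le_div_iff₀ (by positivity)).1 (min_le_right _ _)
  have := h t ht (min_le_left _ _)
  nlinarith

namespace LinearMap

variable {E : Type*} [NormedAddCommGroup E] [InnerProductSpace ℝ E] {T : E →ₗ[ℝ] E}

lemma IsSymmetric.inner_map_add_smul_self (hT : T.IsSymmetric) (x d : E) (t : ℝ) :
    ⟪T (x + t • d), x + t • d⟫ = ⟪T x, x⟫ + t * (2 * ⟪T x, d⟫) + t ^ 2 * ⟪T d, d⟫ := by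
  simp only [map_add, map_smul, inner_add_left, inner_add_right, real_inner_smul_left,
    real_inner_smul_right, hT d x, real_inner_comm (T x) d]
  ring

variable {U : Set E} {z : E}

theorem IsPositive.inner_map_sub_sub_nonneg_of_isMinOn (hT : T.IsPositive) (hU : Convex ℝ U)
    {u₀ u : E} (hu₀ : u₀ ∈ U) (hu : u ∈ U)
    (hmin : IsMinOn (fun u ↦ ⟪T (u - z), u - z⟫) U u₀) : 0 ≤ ⟪T (u₀ - z), u - u₀⟫ := by
  have hcoeff : 0 ≤ 2 * ⟪T (u₀ - z), u - u₀⟫ := by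
    refine nonneg_of_forall_mul_add_sq_mul_nonneg (hT.inner_nonneg_left (u - u₀))
      fun t ht0 ht1 ↦ ?_
    have hmem : u₀ + t • (u - u₀) ∈ U := hU.add_smul_sub_mem hu₀ hu ⟨ht0.le, ht1⟩
    have hle := isMinOn_iff.1 hmin _ hmem
    rw [add_sub_right_comm, hT.isSymmetric.inner_map_add_smul_self] at hle
    linarith
  linarith

theorem IsPositive.inner_sub_map_sub_nonneg_of_isMinOn (hT : T.IsPositive) (hU : Convex ℝ U)
    {z₁ z₂ u₁ u₂ : E} (hu₁ : u₁ ∈ U) (hu₂ : u₂ ∈ U)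
    (hmin₁ : IsMinOn (fun u ↦ ⟪T (u - z₁), u - z₁⟫) U u₁)
    (hmin₂ : IsMinOn (fun u ↦ ⟪T (u - z₂), u - z₂⟫) U u₂) :
    0 ≤ ⟪u₁ - u₂, T z₁ - T z₂⟫ := by
  have h₁ := hT.inner_map_sub_sub_nonneg_of_isMinOn hU hu₁ hu₂ hmin₁
  have h₂ := hT.inner_map_sub_sub_nonneg_of_isMinOn hU hu₂ hu₁ hmin₂
  have h₃ := hT.inner_nonneg_left (u₁ - u₂)
  rw [real_inner_comm]
  simp only [map_sub, inner_sub_left, inner_sub_right] at h₁ h₂ h₃ ⊢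
  linarith

end LinearMap

theorem stmt_10_general (m : ℕ) (R : Matrix (Fin m) (Fin m) ℝ)
    (hR_pd : R.PosDef)
    (U : Set (EuclideanSpace ℝ (Fin m)))
    (hU_convex : Convex ℝ U)
    (v₁ v₂ u₁ u₂ : EuclideanSpace ℝ (Fin m)) (hu₁ : u₁ ∈ U) (hu₂ : u₂ ∈ U)
    (hu₁_min : ∀ u ∈ U,
      ⟪(WithLp.equiv 2 (Fin m → ℝ)).symm
          (R.mulVec (u₁ - (WithLp.equiv 2 (Fin m → ℝ)).symm (R⁻¹.mulVec v₁))),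
        u₁ - (WithLp.equiv 2 (Fin m → ℝ)).symm (R⁻¹.mulVec v₁)⟫ ≤
        ⟪(WithLp.equiv 2 (Fin m → ℝ)).symm
            (R.mulVec (u - (WithLp.equiv 2 (Fin m → ℝ)).symm (R⁻¹.mulVec v₁))),
          u - (WithLp.equiv 2 (Fin m → ℝ)).symm (R⁻¹.mulVec v₁)⟫)
    (hu₂_min : ∀ u ∈ U,
      ⟪(WithLp.equiv 2 (Fin m → ℝ)).symm
          (R.mulVec (u₂ - (WithLp.equiv 2 (Fin m → ℝ)).symm (R⁻¹.mulVec v₂))),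
        u₂ - (WithLp.equiv 2 (Fin m → ℝ)).symm (R⁻¹.mulVec v₂)⟫ ≤
        ⟪(WithLp.equiv 2 (Fin m → ℝ)).symm
            (R.mulVec (u - (WithLp.equiv 2 (Fin m → ℝ)).symm (R⁻¹.mulVec v₂))),
          u - (WithLp.equiv 2 (Fin m → ℝ)).symm (R⁻¹.mulVec v₂)⟫) :
    0 ≤ ⟪u₁ - u₂, v₁ - v₂⟫ := by
  have hT : R.toEuclideanLin.IsPositive :=
    Matrix.isPositive_toEuclideanLin_iff.2 hR_pd.posSemidef
  have hR_inv (v : EuclideanSpace ℝ (Fin m)) : R.toEuclideanLin (R⁻¹.toEuclideanLin v) = v := by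
    ext1
    simp [Matrix.mulVec_mulVec, Matrix.mul_nonsing_inv _ hR_pd.det_pos.ne'.isUnit]
  simpa only [hR_inv] using hT.inner_sub_map_sub_nonneg_of_isMinOn hU_convex hu₁ hu₂
    (z₁ := R⁻¹.toEuclideanLin v₁) (z₂ := R⁻¹.toEuclideanLin v₂)
    (isMinOn_iff.2 hu₁_min) (isMinOn_iff.2 hu₂_min)

/-- With `R` symmetric positive definite and `U ⊆ ℝ^m` nonempty closed convex: if `u₁`, `u₂`
are the `R`-projections of `R⁻¹v₁`, `R⁻¹v₂` onto `U` (the points of `U` minimizing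
`u ↦ ⟨R(u − R⁻¹vᵢ), u − R⁻¹vᵢ⟩`), then `⟨u₁ − u₂, v₁ − v₂⟩ ≥ 0`: the feedback map
`v ↦ P_U^R[R⁻¹v]` is monotone. -/
theorem stmt_10 (m : ℕ) (R : Matrix (Fin m) (Fin m) ℝ)
    (hR_sym : R.IsSymm) (hR_pd : R.PosDef)
    (U : Set (EuclideanSpace ℝ (Fin m)))
    (hU_ne : U.Nonempty) (hU_closed : IsClosed U) (hU_convex : Convex ℝ U)
    (v₁ v₂ u₁ u₂ : EuclideanSpace ℝ (Fin m)) (hu₁ : u₁ ∈ U) (hu₂ : u₂ ∈ U)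
    (hu₁_min : ∀ u ∈ U,
      ⟪(WithLp.equiv 2 (Fin m → ℝ)).symm
          (R.mulVec (u₁ - (WithLp.equiv 2 (Fin m → ℝ)).symm (R⁻¹.mulVec v₁))),
        u₁ - (WithLp.equiv 2 (Fin m → ℝ)).symm (R⁻¹.mulVec v₁)⟫ ≤
        ⟪(WithLp.equiv 2 (Fin m → ℝ)).symm
            (R.mulVec (u - (WithLp.equiv 2 (Fin m → ℝ)).symm (R⁻¹.mulVec v₁))),
          u - (WithLp.equiv 2 (Fin m → ℝ)).symm (R⁻¹.mulVec v₁)⟫)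
    (hu₂_min : ∀ u ∈ U,
      ⟪(WithLp.equiv 2 (Fin m → ℝ)).symm
          (R.mulVec (u₂ - (WithLp.equiv 2 (Fin m → ℝ)).symm (R⁻¹.mulVec v₂))),
        u₂ - (WithLp.equiv 2 (Fin m → ℝ)).symm (R⁻¹.mulVec v₂)⟫ ≤
        ⟪(WithLp.equiv 2 (Fin m → ℝ)).symm
            (R.mulVec (u - (WithLp.equiv 2 (Fin m → ℝ)).symm (R⁻¹.mulVec v₂))),
          u - (WithLp.equiv 2 (Fin m → ℝ)).symm (R⁻¹.mulVec v₂)⟫) :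
    0 ≤ ⟪u₁ - u₂, v₁ - v₂⟫ :=
  stmt_10_general m R hR_pd U hU_convex v₁ v₂ u₁ u₂ hu₁ hu₂ hu₁_min hu₂_min
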